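/- arXiv:2201.07621 — 4 statements merged into one kernel-verified Lean document; each statement's English description precedes it below -/
import Mathlib

section
/- Let d = p + q and let Σ be a real symmetric positive semi-definite d × d matrix with diagonal blocks Σ_1 (p × p) and Σ_2 (q × q), both positive definite. Let Σ_0 be the block-diagonal matrix with diagonal blocks Σ_1 and Σ_2. Then the spectrum of Σ Σ_0^{-1} coincides with the spectrum of the symmetric positive semi-definite matrix Σ_0^{-1/2} Σ Σ_0^{-1/2}; in particular, all eigenvalues of Σ Σ_0^{-1} are real, nonnegative, and contained in [0, 2]. -/
open Matrix

section
open scoped ComplexOrder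

/-- The positive semidefinite square root of a positive semidefinite matrix
(the definition `Matrix.PosSemidef.sqrt` of the older Mathlib, removed since). -/
noncomputable def Matrix.PosSemidef.sqrt {n 𝕜 : Type*} [Fintype n] [DecidableEq n] [RCLike 𝕜]
    (A : Matrix n n 𝕜) (hA : A.PosSemidef) : Matrix n n 𝕜 :=
  hA.1.eigenvectorUnitary.1 * diagonal ((↑) ∘ (√·) ∘ hA.1.eigenvalues) *
  (star hA.1.eigenvectorUnitary : Matrix n n 𝕜)

end

/-!
With `S` the square root of `A₀`, the matrix `A A₀⁻¹ = S (S⁻¹ A S⁻¹) S⁻¹` is similar to the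
positive semidefinite matrix `M = S⁻¹ A S⁻¹`, over `ℝ` and after complexification alike.
Conjugating by `diag(1, -1)` flips the signs of the off-diagonal blocks of `A` and keeps it
positive semidefinite; the result is `2 A₀ - A`. Hence `2 - M = S⁻¹ (2 A₀ - A) S⁻¹` is positive
semidefinite too, which traps the spectrum of `M` in `[0, 2]`.
-/

open scoped ComplexOrder

namespace Matrix

section

variable {n 𝕜 : Type*} [Fintype n] [DecidableEq n] [RCLike 𝕜]

lemma PosSemidef.posSemidef_sqrt {A : Matrix n n 𝕜} (hA : A.PosSemidef) :
    hA.sqrt.PosSemidef := by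
  unfold PosSemidef.sqrt
  rw [star_eq_conjTranspose]
  refine (posSemidef_diagonal_iff.2 fun i => ?_).mul_mul_conjTranspose_same _
  exact RCLike.ofReal_nonneg.2 (Real.sqrt_nonneg _)

lemma PosSemidef.sqrt_mul_self {A : Matrix n n 𝕜} (hA : A.PosSemidef) :
    hA.sqrt * hA.sqrt = A := by
  set U : Matrix n n 𝕜 := (hA.1.eigenvectorUnitary : Matrix n n 𝕜)
  set D : Matrix n n 𝕜 := diagonal ((↑) ∘ (√·) ∘ hA.1.eigenvalues)
  have hU : star U * U = 1 := Unitary.coe_star_mul_self _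
  have hD : D * D = diagonal ((↑) ∘ hA.1.eigenvalues) := by
    rw [diagonal_mul_diagonal]
    congr 1
    funext i
    simp [← RCLike.ofReal_mul, Real.mul_self_sqrt (hA.eigenvalues_nonneg i)]
  calc hA.sqrt * hA.sqrt = U * (D * (star U * U) * D) * star U := by
        simp only [PosSemidef.sqrt, U, D, mul_assoc]
    _ = A := by
      rw [hU, mul_one, hD]
      conv_rhs => rw [hA.1.spectral_theorem]
      simp [U, Unitary.conjStarAlgAut_apply, mul_assoc]

lemma PosSemidef.map_algebraMap {M : Matrix n n ℝ} (hM : M.PosSemidef) :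
    (M.map (algebraMap ℝ 𝕜)).PosSemidef := by
  have hS : hM.sqrtᴴ = hM.sqrt := hM.posSemidef_sqrt.isHermitian
  have hfactor : M.map (algebraMap ℝ 𝕜) =
      (hM.sqrt.map (algebraMap ℝ 𝕜))ᴴ * hM.sqrt.map (algebraMap ℝ 𝕜) := by
    rw [← conjTranspose_map _ (fun a => by simp), hS, ← Matrix.map_mul, hM.sqrt_mul_self]
  rw [hfactor]
  exact posSemidef_conjTranspose_mul_self _

lemma PosSemidef.mem_spectrum_Icc {M : Matrix n n 𝕜} {c : ℝ} (hM : M.PosSemidef)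
    (hcM : (c • 1 - M).PosSemidef) {z : 𝕜} (hz : z ∈ spectrum 𝕜 M) :
    ∃ x : ℝ, z = x ∧ 0 ≤ x ∧ x ≤ c := by
  have hcz : (c : 𝕜) - z ∈ spectrum 𝕜 (c • 1 - M) := by
    rw [← Algebra.algebraMap_eq_smul_one, IsScalarTower.algebraMap_apply ℝ 𝕜,
      ← spectrum.singleton_sub_eq]
    exact Set.sub_mem_sub rfl hz
  obtain ⟨x, hx, rfl⟩ := RCLike.nonneg_iff_exists_ofReal.mp
    ((posSemidef_iff_isHermitian_and_spectrum_nonneg.mp hM).2 hz)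
  have hcx := (posSemidef_iff_isHermitian_and_spectrum_nonneg.mp hcM).2 hcz
  rw [← RCLike.ofReal_sub, Set.mem_ofPred_eq, RCLike.ofReal_nonneg] at hcx
  exact ⟨x, rfl, hx, sub_nonneg.mp hcx⟩

lemma PosSemidef.mem_spectrum_map_Icc {M : Matrix n n ℝ} {c : ℝ} (hM : M.PosSemidef)
    (hcM : (c • 1 - M).PosSemidef) {z : 𝕜} (hz : z ∈ spectrum 𝕜 (M.map (algebraMap ℝ 𝕜))) :
    ∃ x : ℝ, z = x ∧ 0 ≤ x ∧ x ≤ c := by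
  have hmap (X : Matrix n n ℝ) : X.map (algebraMap ℝ 𝕜) = (Algebra.ofId ℝ 𝕜).mapMatrix X := rfl
  have hcM' := hcM.map_algebraMap (𝕜 := 𝕜)
  rw [hmap, map_sub, map_smul, map_one, ← hmap] at hcM'
  exact hM.map_algebraMap.mem_spectrum_Icc hcM' hz

lemma PosSemidef.inv_mul_mul_inv {R : Type*} [CommRing R] [PartialOrder R] [StarRing R]
    {S X : Matrix n n R} (hS : S.IsHermitian) (hX : X.PosSemidef) :
    (S⁻¹ * X * S⁻¹).PosSemidef := by
  simpa [hS.inv.eq] using hX.mul_mul_conjTranspose_same S⁻¹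

lemma mul_inv_mul_self_eq {R : Type*} [CommRing R] {S : Matrix n n R} (hS : IsUnit S)
    (A : Matrix n n R) : A * (S * S)⁻¹ = S * (S⁻¹ * A * S⁻¹) * S⁻¹ := by
  rw [Matrix.mul_inv_rev]
  simp only [← mul_assoc, mul_nonsing_inv _ ((isUnit_iff_isUnit_det S).mp hS), one_mul]

lemma inv_mul_mul_self_mul_inv_eq_one {R : Type*} [CommRing R] {S : Matrix n n R}
    (hS : IsUnit S) : S⁻¹ * (S * S) * S⁻¹ = 1 := by
  have hdet := (isUnit_iff_isUnit_det S).mp hS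
  rw [← mul_assoc, nonsing_inv_mul _ hdet, one_mul, mul_nonsing_inv _ hdet]

lemma spectrum_mul_mul_inv {R : Type*} [CommRing R] {S : Matrix n n R} (hS : IsUnit S)
    (M : Matrix n n R) : spectrum R (S * M * S⁻¹) = spectrum R M := by
  lift S to (Matrix n n R)ˣ using hS
  rw [← coe_units_inv, spectrum.units_conjugate]

lemma spectrum_map_mul_mul_inv {R K : Type*} [CommRing R] [CommRing K] (f : R →+* K)
    {S : Matrix n n R} (hS : IsUnit S) (M : Matrix n n R) :
    spectrum K ((S * M * S⁻¹).map f) = spectrum K (M.map f) := by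
  lift S to (Matrix n n R)ˣ using hS
  have := spectrum.units_conjugate (R := K) (a := M.map f)
    (u := Units.map f.mapMatrix.toMonoidHom S)
  rw [Units.coe_map, Units.coe_map_inv] at this
  simpa [← coe_units_inv, Matrix.map_mul] using this

end

section

variable {m n R : Type*} [Fintype m] [Fintype n] [DecidableEq m] [DecidableEq n]

lemma PosSemidef.fromBlocks_neg_offDiag [Ring R] [PartialOrder R] [StarRing R]
    {A : Matrix m m R} {B : Matrix m n R} {C : Matrix n m R} {D : Matrix n n R}
    (h : (fromBlocks A B C D).PosSemidef) : (fromBlocks A (-B) (-C) D).PosSemidef := by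
  simpa [fromBlocks_conjTranspose, fromBlocks_multiply] using
    h.mul_mul_conjTranspose_same (fromBlocks 1 0 0 (-1) : Matrix (m ⊕ n) (m ⊕ n) R)

lemma PosSemidef.two_smul_fromBlocks_diag_sub [CommRing R] [PartialOrder R] [StarRing R]
    {A : Matrix (m ⊕ n) (m ⊕ n) R} (hA : A.PosSemidef) :
    ((2 : R) • fromBlocks A.toBlocks₁₁ 0 0 A.toBlocks₂₂ - A).PosSemidef := by
  have hblocks : (2 : R) • fromBlocks A.toBlocks₁₁ 0 0 A.toBlocks₂₂ - A
      = fromBlocks A.toBlocks₁₁ (-A.toBlocks₁₂) (-A.toBlocks₂₁) A.toBlocks₂₂ := by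
    ext (i | i) (j | j) <;> simp [toBlocks₁₁, toBlocks₁₂, toBlocks₂₁, toBlocks₂₂, two_smul]
  rw [hblocks]
  exact (fromBlocks_toBlocks A ▸ hA).fromBlocks_neg_offDiag

end

end Matrix

theorem spectrum_blockRescaled_subset_Icc_general
    (p q : ℕ)
    (A : Matrix (Fin p ⊕ Fin q) (Fin p ⊕ Fin q) ℝ) (hA : A.PosSemidef)
    (h1 : A.toBlocks₁₁.PosDef) (h2 : A.toBlocks₂₂.PosDef)
    (A₀ : Matrix (Fin p ⊕ Fin q) (Fin p ⊕ Fin q) ℝ)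
    (hA₀def : A₀ = Matrix.fromBlocks A.toBlocks₁₁ 0 0 A.toBlocks₂₂)
    (hA₀ : A₀.PosSemidef) :
    spectrum ℝ (A * A₀⁻¹) = spectrum ℝ (hA₀.sqrt⁻¹ * A * hA₀.sqrt⁻¹) ∧
    (hA₀.sqrt⁻¹ * A * hA₀.sqrt⁻¹).PosSemidef ∧
    (∀ z ∈ spectrum ℂ ((A * A₀⁻¹).map (algebraMap ℝ ℂ)),
      ∃ x : ℝ, z = (x : ℂ) ∧ 0 ≤ x ∧ x ≤ 2) := by
  set S := hA₀.sqrt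
  have hSS : S * S = A₀ := hA₀.sqrt_mul_self
  have hS : IsUnit S := by
    refine isUnit_of_mul_isUnit_left (y := S) ?_
    rw [hSS, isUnit_iff_isUnit_det, hA₀def, det_fromBlocks_zero₂₁]
    exact (mul_pos h1.det_pos h2.det_pos).ne'.isUnit
  have hSherm : S.IsHermitian := hA₀.posSemidef_sqrt.isHermitian
  have hconj : A * A₀⁻¹ = S * (S⁻¹ * A * S⁻¹) * S⁻¹ := by rw [← hSS, mul_inv_mul_self_eq hS]
  have hM : (S⁻¹ * A * S⁻¹).PosSemidef := hA.inv_mul_mul_inv hSherm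
  have h2M : ((2 : ℝ) • 1 - S⁻¹ * A * S⁻¹).PosSemidef := by
    have := hA.two_smul_fromBlocks_diag_sub.inv_mul_mul_inv hSherm
    rwa [← hA₀def, mul_sub, sub_mul, mul_smul_comm, smul_mul_assoc, ← hSS,
      inv_mul_mul_self_mul_inv_eq_one hS] at this
  refine ⟨by rw [hconj, spectrum_mul_mul_inv hS], hM, fun z hz => ?_⟩
  rw [hconj, spectrum_map_mul_mul_inv _ hS] at hz
  exact hM.mem_spectrum_map_Icc h2M hz

/-- For a positive semi-definite block matrix `A` with positive definite diagonal
blocks, the spectrum of `A A₀⁻¹` (with `A₀` the block-diagonal part) coincides with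
the spectrum of the symmetric positive semi-definite matrix `A₀^{-1/2} A A₀^{-1/2}`;
in particular all eigenvalues of `A A₀⁻¹` are real, nonnegative and lie in `[0,2]`. -/
theorem spectrum_blockRescaled_subset_Icc
    (p q : ℕ) (hp : 1 ≤ p) (hq : 1 ≤ q)
    (A : Matrix (Fin p ⊕ Fin q) (Fin p ⊕ Fin q) ℝ) (hA : A.PosSemidef)
    (h1 : A.toBlocks₁₁.PosDef) (h2 : A.toBlocks₂₂.PosDef)
    (A₀ : Matrix (Fin p ⊕ Fin q) (Fin p ⊕ Fin q) ℝ)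
    (hA₀def : A₀ = Matrix.fromBlocks A.toBlocks₁₁ 0 0 A.toBlocks₂₂)
    (hA₀ : A₀.PosSemidef) :
    spectrum ℝ (A * A₀⁻¹) = spectrum ℝ (hA₀.sqrt⁻¹ * A * hA₀.sqrt⁻¹) ∧
    (hA₀.sqrt⁻¹ * A * hA₀.sqrt⁻¹).PosSemidef ∧
    (∀ z ∈ spectrum ℂ ((A * A₀⁻¹).map (algebraMap ℝ ℂ)),
      ∃ x : ℝ, z = (x : ℂ) ∧ 0 ≤ x ∧ x ≤ 2) :=
  spectrum_blockRescaled_subset_Icc_general p q A hA h1 h2 A₀ hA₀def hA₀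
end

section
/- For every integer k ≥ 0, Σ_{η=0}^{⌊k/2⌋} binom(k, 2η) · binom(2η, η) · 4^{−η} = binom(2k, k) / 2^k, which equals 2^k Γ(k+1/2)/(√π · k!). -/
/-!
Since `(1 + X) ^ (2 * k) = ((1 + X ^ 2) + 2 * X) ^ k`, comparing coefficients of `X ^ k` after a
binomial expansion of the right side gives `∑ C(k, 2η) C(2η, η) 2 ^ (k - 2η) = C(2k, k)`; only the
even powers of `1 + X ^ 2` contribute. For the Gamma form, `Γ(k + 1/2) = (2k - 1)‼ √π / 2 ^ k`, and
`(2k)! = (2k)‼ (2k - 1)‼ = 2 ^ k k! (2k - 1)‼` gives `C(2k, k) k! = 2 ^ k (2k - 1)‼`.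
-/

open Finset Polynomial
open scoped Nat

theorem Polynomial.coeff_one_add_X_sq_pow {R : Type*} [CommSemiring R] (j n : ℕ) :
    ((1 + X ^ 2 : R[X]) ^ j).coeff n = if 2 ∣ n then (j.choose (n / 2) : R) else 0 := by
  have h : (1 + X ^ 2 : R[X]) ^ j = expand R 2 ((1 + X) ^ j) := by simp
  rw [h, coeff_expand two_pos]
  split_ifs <;> simp [coeff_one_add_X_pow]

theorem Finset.sum_two_mul_range_div_two_succ {M : Type*} [AddCommMonoid M] (f : ℕ → M) (n : ℕ) :
    ∑ i ∈ range (n / 2 + 1), f (2 * i) = ∑ j ∈ range (n + 1), if 2 ∣ j then f j else 0 := by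
  rw [← sum_filter]
  refine sum_nbij' (2 * ·) (· / 2) ?_ ?_ ?_ ?_ (fun _ _ ↦ rfl)
  all_goals intro i hi; simp only [mem_filter, mem_range] at hi ⊢; omega

theorem Nat.sum_choose_mul_centralBinom_mul_two_pow (k : ℕ) :
    ∑ i ∈ range (k / 2 + 1), k.choose (2 * i) * i.centralBinom * 2 ^ (k - 2 * i) =
      k.centralBinom := by
  have hsq : ((1 : ℕ[X]) + X) ^ (2 * k) = ((1 + X ^ 2) + 2 * X) ^ k := by
    rw [pow_mul]; ring
  have hterm (j : ℕ) (hj : j ∈ range (k + 1)) :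
      ((1 + X ^ 2 : ℕ[X]) ^ j * (2 * X) ^ (k - j) * (k.choose j : ℕ[X])).coeff k =
        if 2 ∣ j then k.choose j * j.choose (j / 2) * 2 ^ (k - j) else 0 := by
    have hjk : j ≤ k := Nat.lt_succ_iff.mp (mem_range.mp hj)
    rw [show (1 + X ^ 2 : ℕ[X]) ^ j * (2 * X) ^ (k - j) * (k.choose j : ℕ[X]) =
        C (k.choose j * 2 ^ (k - j)) * ((1 + X ^ 2) ^ j * X ^ (k - j)) by simp; ring,
      coeff_C_mul, coeff_mul_X_pow', if_pos (Nat.sub_le k j), Nat.sub_sub_self hjk,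
      coeff_one_add_X_sq_pow]
    split_ifs <;> simp; ring
  calc ∑ i ∈ range (k / 2 + 1), k.choose (2 * i) * i.centralBinom * 2 ^ (k - 2 * i)
      = ∑ j ∈ range (k + 1),
          ((1 + X ^ 2 : ℕ[X]) ^ j * (2 * X) ^ (k - j) * (k.choose j : ℕ[X])).coeff k := by
        rw [sum_congr rfl hterm, ← sum_two_mul_range_div_two_succ]
        simp [Nat.centralBinom_eq_two_mul_choose]
    _ = k.centralBinom := by
        rw [← finsetSum_coeff, ← add_pow, ← hsq, coeff_one_add_X_pow, Nat.cast_id,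
          Nat.centralBinom_eq_two_mul_choose]

theorem Nat.factorial_eq_doubleFactorial_mul_doubleFactorial_sub_one (n : ℕ) :
    n ! = n‼ * (n - 1)‼ := by
  cases n with
  | zero => rfl
  | succ m => exact factorial_eq_mul_doubleFactorial m

theorem Nat.centralBinom_mul_factorial (k : ℕ) : k.centralBinom * k ! = 2 ^ k * (2 * k - 1)‼ := by
  apply Nat.eq_of_mul_eq_mul_right (factorial_pos k)
  rw [mul_right_comm (2 ^ k), ← doubleFactorial_two_mul,
    ← factorial_eq_doubleFactorial_mul_doubleFactorial_sub_one, centralBinom, two_mul,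
    add_choose_mul_factorial_mul_factorial]

open Real Finset

/-- `∑_{η=0}^{⌊k/2⌋} C(k,2η) C(2η,η) 4^{−η} = C(2k,k)/2ᵏ = 2ᵏ Γ(k+1/2)/(√π k!)`. -/
theorem sum_binomial_eq_centralBinom_div (k : ℕ) :
    (∑ η ∈ Finset.range (k / 2 + 1),
        (Nat.choose k (2 * η) : ℝ) * (Nat.choose (2 * η) η : ℝ) / 4 ^ η) =
      (Nat.choose (2 * k) k : ℝ) / 2 ^ k ∧
    (Nat.choose (2 * k) k : ℝ) / 2 ^ k =
      2 ^ k * Real.Gamma (k + 1 / 2) / (Real.sqrt Real.pi * (Nat.factorial k : ℝ)) := by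
  rw [← Nat.centralBinom_eq_two_mul_choose]
  constructor
  · rw [eq_div_iff (by positivity), sum_mul, ← Nat.sum_choose_mul_centralBinom_mul_two_pow,
      Nat.cast_sum]
    refine sum_congr rfl fun i hi ↦ ?_
    have h2i : 2 * i ≤ k := by rw [mem_range] at hi; omega
    rw [← Nat.centralBinom_eq_two_mul_choose,
      show (4 : ℝ) ^ i = 2 ^ (2 * i) by rw [pow_mul]; norm_num,
      ← Nat.add_sub_cancel' h2i, pow_add, Nat.add_sub_cancel_left]
    push_cast
    field_simp
  · have h := congrArg (Nat.cast : ℕ → ℝ) (Nat.centralBinom_mul_factorial k)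
    push_cast at h
    rw [Gamma_nat_add_half]
    field_simp
    linear_combination h
end

section
/- Let 0 < t < 1 and s > 0, and define h = √(s + t − st), a = (1−h)²/(1−t)², b = (1+h)²/(1−t)², and the Fisher limiting spectral density p_{s,t}(x) = (1−t)/(2π x (s + t x)) · √((b−x)(x−a)) for a ≤ x ≤ b. Then ∫_a^b (x/(x + s/t)) · p_{s,t}(x) dx = t/(s + t). -/
/-!
On `(a, b)` the weight `x / (x + s/t)` cancels the factor `x` of the density and turns
`s + t x` into `t (x + s/t)`, so the integral is `(1 - t)/(2π t)` times
`∫_a^b √((b - x)(x - a)) / (x + c)² dx` with `c = s/t`. Centring at `(a + b)/2` reduces this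
to `∫_{-r}^{r} √(r² - u²) / (u + q)² du = π (q / √(q² - r²) - 1)`, which has an elementary
primitive.
For the Fisher edges, `(a + c)(b + c) = ((s + t)/(t (1 - t)))²`, and the constants collapse to
`t / (s + t)`.
-/

open Real Set

section SqrtIntegral

variable {r q u : ℝ}

lemma hasDerivAt_sqrt_sq_sub_sq (hu : u ∈ Ioo (-r) r) :
    HasDerivAt (fun u => √(r ^ 2 - u ^ 2)) (-u / √(r ^ 2 - u ^ 2)) u := by
  have hpos : 0 < r ^ 2 - u ^ 2 := by nlinarith [hu.1, hu.2]
  convert ((hasDerivAt_pow 2 u).const_sub (r ^ 2)).sqrt hpos.ne' using 1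
  field_simp
  ring

lemma hasDerivAt_arcsin_div (hr : 0 < r) (hu : u ∈ Ioo (-r) r) :
    HasDerivAt (fun u => arcsin (u / r)) (1 / √(r ^ 2 - u ^ 2)) u := by
  have hsqrt : √(1 - (u / r) ^ 2) = √(r ^ 2 - u ^ 2) / r := by
    rw [show 1 - (u / r) ^ 2 = (r ^ 2 - u ^ 2) / r ^ 2 by field_simp, sqrt_div' _ (sq_nonneg r),
      sqrt_sq hr.le]
  have h₁ : u / r ≠ -1 := by rw [ne_eq, div_eq_iff hr.ne']; linarith [hu.1]
  have h₂ : u / r ≠ 1 := by rw [ne_eq, div_eq_iff hr.ne']; linarith [hu.2]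
  refine ((hasDerivAt_arcsin h₁ h₂).comp u ((hasDerivAt_id u).div_const r)).congr_deriv ?_
  rw [hsqrt]
  field_simp

/-- The Möbius map `u ↦ (r² + q u) / (r (u + q))` maps `[-r, r]` onto `[-1, 1]` fixing `±r`;
its arcsine is the angle variable adapted to the pole at `-q`. -/
lemma hasDerivAt_arcsin_mobius (hr : 0 < r) (hrq : r < q) (hu : u ∈ Ioo (-r) r) :
    HasDerivAt (fun u => arcsin ((r ^ 2 + q * u) / (r * (u + q))))
      (√(q ^ 2 - r ^ 2) / ((u + q) * √(r ^ 2 - u ^ 2))) u := by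
  have huq : 0 < u + q := by linarith [hu.1]
  have hρ : 0 < r ^ 2 - u ^ 2 := by nlinarith [hu.1, hu.2]
  have hw : 0 < q ^ 2 - r ^ 2 := by nlinarith
  set g := (r ^ 2 + q * u) / (r * (u + q)) with hg_def
  have hg : 1 - g ^ 2 = (√(q ^ 2 - r ^ 2) * √(r ^ 2 - u ^ 2) / (r * (u + q))) ^ 2 := by
    rw [hg_def, show ∀ x y z : ℝ, (x * y / z) ^ 2 = x ^ 2 * y ^ 2 / z ^ 2 by intros; ring,
      sq_sqrt hw.le, sq_sqrt hρ.le]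
    field_simp
    ring
  have hg_pos : 0 < 1 - g ^ 2 := by rw [hg]; positivity
  have h₁ : g ≠ -1 := by rintro hg1; norm_num [hg1] at hg_pos
  have h₂ : g ≠ 1 := by rintro hg1; norm_num [hg1] at hg_pos
  have hmob : HasDerivAt (fun u => (r ^ 2 + q * u) / (r * (u + q)))
      ((q ^ 2 - r ^ 2) / (r * (u + q) ^ 2)) u := by
    refine (((hasDerivAt_id u).const_mul q).const_add (r ^ 2)).div
      (((hasDerivAt_id u).add_const q).const_mul r) (by positivity) |>.congr_deriv ?_
    simp only [id]
    field_simp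
    ring
  refine ((hasDerivAt_arcsin h₁ h₂).comp u hmob).congr_deriv ?_
  rw [hg, sqrt_sq (by positivity)]
  field_simp
  rw [sq_sqrt hw.le]

lemma hasDerivAt_sqrt_sq_sub_sq_div_sq_primitive (hr : 0 < r) (hrq : r < q)
    (hu : u ∈ Ioo (-r) r) :
    HasDerivAt (fun u => -√(r ^ 2 - u ^ 2) / (u + q) - arcsin (u / r)
        + q / √(q ^ 2 - r ^ 2) * arcsin ((r ^ 2 + q * u) / (r * (u + q))))
      (√(r ^ 2 - u ^ 2) / (u + q) ^ 2) u := by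
  have huq : 0 < u + q := by linarith [hu.1]
  have hρ : 0 < r ^ 2 - u ^ 2 := by nlinarith [hu.1, hu.2]
  have hw : 0 < q ^ 2 - r ^ 2 := by nlinarith
  refine ((((hasDerivAt_sqrt_sq_sub_sq hu).neg.div ((hasDerivAt_id u).add_const q)
    huq.ne').sub (hasDerivAt_arcsin_div hr hu)).add
    ((hasDerivAt_arcsin_mobius hr hrq hu).const_mul _)).congr_deriv ?_
  simp only [id, Pi.neg_apply]
  field_simp
  ring

lemma integral_sqrt_sq_sub_sq_div_sq (hr : 0 < r) (hrq : r < q) :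
    ∫ u in (-r)..r, √(r ^ 2 - u ^ 2) / (u + q) ^ 2 = π * (q / √(q ^ 2 - r ^ 2) - 1) := by
  have hq_ne : ∀ u ∈ Icc (-r) r, u + q ≠ 0 := fun u hu => by linarith [hu.1]
  have hcont : ContinuousOn (fun u => -√(r ^ 2 - u ^ 2) / (u + q) - arcsin (u / r)
      + q / √(q ^ 2 - r ^ 2) * arcsin ((r ^ 2 + q * u) / (r * (u + q)))) (Icc (-r) r) := by
    have : ∀ u ∈ Icc (-r) r, r * (u + q) ≠ 0 := fun u hu => mul_ne_zero hr.ne' (hq_ne u hu)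
    fun_prop (disch := assumption)
  have hint : IntervalIntegrable (fun u => √(r ^ 2 - u ^ 2) / (u + q) ^ 2) MeasureTheory.volume
      (-r) r := by
    refine ContinuousOn.intervalIntegrable ?_
    rw [uIcc_of_le (by linarith)]
    have : ∀ u ∈ Icc (-r) r, (u + q) ^ 2 ≠ 0 := fun u hu => pow_ne_zero 2 (hq_ne u hu)
    fun_prop (disch := assumption)
  rw [intervalIntegral.integral_eq_sub_of_hasDerivAt_of_le (by linarith) hcont
    (fun u hu => hasDerivAt_sqrt_sq_sub_sq_div_sq_primitive hr hrq hu) hint]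
  have hmob_right : (r ^ 2 + q * r) / (r * (r + q)) = 1 := by
    rw [div_eq_one_iff_eq (mul_ne_zero hr.ne' (by linarith))]; ring
  have hmob_left : (r ^ 2 + q * -r) / (r * (-r + q)) = -1 := by
    rw [div_eq_iff (by nlinarith)]; ring
  simp only [hmob_right, hmob_left, div_self hr.ne', neg_div_self hr.ne', neg_sq, sub_self,
    sqrt_zero, arcsin_one, arcsin_neg_one]
  ring

end SqrtIntegral

lemma integral_sqrt_mul_div_sq {a b c : ℝ} (hab : a < b) (hac : 0 < a + c) :
    ∫ x in a..b, √((b - x) * (x - a)) / (x + c) ^ 2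
      = π * (((a + b) / 2 + c) / √((a + c) * (b + c)) - 1) := by
  have hshift := intervalIntegral.integral_comp_add_right (a := -((b - a) / 2))
    (b := (b - a) / 2) (fun x => √((b - x) * (x - a)) / (x + c) ^ 2) ((a + b) / 2)
  rw [show -((b - a) / 2) + (a + b) / 2 = a by ring, show (b - a) / 2 + (a + b) / 2 = b by ring]
    at hshift
  rw [← hshift, show (a + c) * (b + c) = ((a + b) / 2 + c) ^ 2 - ((b - a) / 2) ^ 2 by ring,
    ← integral_sqrt_sq_sub_sq_div_sq (by linarith) (by linarith)]
  refine intervalIntegral.integral_congr fun u _ => ?_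
  rw [show (b - (u + (a + b) / 2)) * (u + (a + b) / 2 - a) = ((b - a) / 2) ^ 2 - u ^ 2 by ring,
    show u + (a + b) / 2 + c = u + ((a + b) / 2 + c) by ring]

section Fisher

variable {s t h : ℝ}

lemma fisher_edges_add (hh : h ^ 2 = s + t - s * t) :
    (1 - h) ^ 2 / (1 - t) ^ 2 + (1 + h) ^ 2 / (1 - t) ^ 2
      = 2 * (1 + s + t - s * t) / (1 - t) ^ 2 := by
  rw [← add_div]
  congr 1
  linear_combination 2 * hh

lemma sqrt_fisher_edges_add_mul (hs : 0 < s) (ht0 : 0 < t) (ht1 : t < 1)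
    (hh : h ^ 2 = s + t - s * t) :
    √(((1 - h) ^ 2 / (1 - t) ^ 2 + s / t) * ((1 + h) ^ 2 / (1 - t) ^ 2 + s / t))
      = (s + t) / (t * (1 - t)) := by
  have ht1' : 1 - t ≠ 0 := by linarith
  have hprod : (1 - h) * (1 + h) = (1 - s) * (1 - t) := by linear_combination -hh
  have hsum : (1 - h) ^ 2 + (1 + h) ^ 2 = 2 * (1 + s + t - s * t) := by linear_combination 2 * hh
  rw [← sqrt_sq (show 0 ≤ (s + t) / (t * (1 - t)) by have := sub_pos.2 ht1; positivity)]
  congr 1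
  field_simp
  linear_combination t ^ 2 * ((1 - h) * (1 + h) + (1 - s) * (1 - t)) * hprod
    + t * (1 - t) ^ 2 * s * hsum

lemma mul_fisher_density_eq (hs : 0 < s) (ht : 0 < t) {x : ℝ} (hx : 0 < x) (y : ℝ) :
    x / (x + s / t) * ((1 - t) / (2 * π * x * (s + t * x)) * y)
      = (1 - t) / (2 * π * t) * (y / (x + s / t) ^ 2) := by
  have : 0 < x + s / t := by positivity
  rw [show s + t * x = t * (x + s / t) by field_simp; ring]
  field_simp

end Fisher

/-- First moment identity for the Fisher limiting spectral distribution: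
`∫_a^b (x/(x+s/t)) p_{s,t}(x) dx = t/(s+t)`. -/
theorem fisher_I_one (s t : ℝ) (hs : 0 < s) (ht0 : 0 < t) (ht1 : t < 1) :
    let h := Real.sqrt (s + t - s * t)
    let a := (1 - h) ^ 2 / (1 - t) ^ 2
    let b := (1 + h) ^ 2 / (1 - t) ^ 2
    (∫ x in a..b,
        (x / (x + s / t)) *
          ((1 - t) / (2 * Real.pi * x * (s + t * x)) *
            Real.sqrt ((b - x) * (x - a)))) = t / (s + t) := by
  intro h a b
  have hst : 0 < s + t - s * t := by nlinarith
  have hh : h ^ 2 = s + t - s * t := sq_sqrt hst.le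
  have ha : 0 ≤ a := by positivity
  have hab : a < b := div_lt_div_of_pos_right (by nlinarith [sqrt_pos.2 hst]) (by nlinarith)
  rw [intervalIntegral.integral_congr_ae (g := fun x => (1 - t) / (2 * π * t) *
      (√((b - x) * (x - a)) / (x + s / t) ^ 2)) (.of_forall fun x hx =>
      mul_fisher_density_eq hs ht0 (ha.trans_lt (uIoc_of_le hab.le ▸ hx).1) _),
    intervalIntegral.integral_const_mul, integral_sqrt_mul_div_sq hab (by positivity),
    show √((a + s / t) * (b + s / t)) = _ from sqrt_fisher_edges_add_mul hs ht0 ht1 hh,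
    show a + b = _ from fisher_edges_add hh]
  have : 1 - t ≠ 0 := by linarith
  field_simp
  ring
end

section
/- Let k ≥ 1 be an integer. For 0 < t < 1 define I_k(t) = ∫_0^b (x/(x + 1/t))^k · p_{1,t}(x) dx, where b = 4/(1−t)² and p_{1,t}(x) = (1−t)√((b−x)x)/(2π x (1 + t x)) on (0, b]. Then lim_{t → 1⁻} I_k(t) = binom(2k, k) / 4^k. -/
/-!
For `0 < x ≤ b` the integrand of `I_k(t)` equals
`(x / (x + 1/t))ᵏ √(4 - (1 - t)² x) / (2π √x (1 + t x))`, an expression that vanishes for `x > b`,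
so `I_k(t)` is an integral over `(0, ∞)` of a function continuous in `t` at `t = 1`. For `t ≥ 1/2`
it is dominated by `2 / (π √x (1 + x))`, which is integrable at `0` and at `∞`, so by dominated
convergence `I_k(t)` tends to `∫₀^∞ (x / (x + 1))ᵏ dx / (π √x (1 + x))`. The substitution
`x = tan² φ` turns this into Wallis' integral `(2/π) ∫₀^{π/2} sin^{2k} φ dφ = C(2k, k) / 4ᵏ`.
-/

open Real Filter MeasureTheory Set Topology

theorem integral_sin_pow_two_mul_zero_pi_div_two (k : ℕ) :
    ∫ x in (0:ℝ)..π / 2, sin x ^ (2 * k) = π / 2 * (k.centralBinom / 4 ^ k) := by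
  induction k with
  | zero => simp
  | succ k ih =>
    have hc : ((k : ℝ) + 1) * (k + 1).centralBinom = 2 * (2 * k + 1) * k.centralBinom := by
      exact_mod_cast Nat.succ_mul_centralBinom_succ k
    rw [Nat.mul_succ, integral_sin_pow, ih]
    simp only [sin_zero, cos_pi_div_two, sin_pi_div_two]
    push_cast
    field_simp
    linear_combination (-(2 * π * 4 ^ k)) * hc

theorem tan_sq_image_Ioo_zero_pi_div_two :
    (fun φ => tan φ ^ 2) '' Ioo 0 (π / 2) = Ioi 0 := by
  refine Subset.antisymm ?_ fun y (hy : 0 < y) => ?_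
  · rintro _ ⟨φ, hφ, rfl⟩
    exact pow_pos (tan_pos_of_pos_of_lt_pi_div_two hφ.1 hφ.2) 2
  · refine ⟨arctan √y, ⟨?_, arctan_lt_pi_div_two _⟩, ?_⟩
    · simpa using arctan_strictMono (sqrt_pos.2 hy)
    · simp only [tan_arctan, sq_sqrt hy.le]

theorem injOn_tan_sq_Ioo_zero_pi_div_two : InjOn (fun φ => tan φ ^ 2) (Ioo 0 (π / 2)) := by
  intro a ha b hb hab
  have hπ := pi_pos
  refine strictMonoOn_tan.injOn ⟨by linarith [ha.1], ha.2⟩ ⟨by linarith [hb.1], hb.2⟩ ?_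
  exact (pow_left_inj₀ (tan_pos_of_pos_of_lt_pi_div_two ha.1 ha.2).le
    (tan_pos_of_pos_of_lt_pi_div_two hb.1 hb.2).le two_ne_zero).1 hab

theorem hasDerivWithinAt_tan_sq {φ : ℝ} (hφ : φ ∈ Ioo 0 (π / 2)) (s : Set ℝ) :
    HasDerivWithinAt (fun φ => tan φ ^ 2) (2 * tan φ / cos φ ^ 2) s φ := by
  have hcos : cos φ ≠ 0 := (cos_pos_of_mem_Ioo ⟨by linarith [hφ.1, pi_pos], hφ.2⟩).ne'
  exact ((hasDerivAt_tan hcos).fun_pow 2).hasDerivWithinAt.congr_deriv (by push_cast; ring)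

theorem abs_two_mul_tan_div_cos_sq {φ : ℝ} (hφ : φ ∈ Ioo 0 (π / 2)) :
    |2 * tan φ / cos φ ^ 2| = 2 * tan φ / cos φ ^ 2 :=
  abs_of_pos <| div_pos (mul_pos two_pos (tan_pos_of_pos_of_lt_pi_div_two hφ.1 hφ.2))
    (pow_pos (cos_pos_of_mem_Ioo ⟨by linarith [hφ.1, pi_pos], hφ.2⟩) 2)

theorem integrableOn_Ioi_zero_iff_tan_sq (g : ℝ → ℝ) :
    IntegrableOn g (Ioi 0) ↔
      IntegrableOn (fun φ => 2 * tan φ / cos φ ^ 2 * g (tan φ ^ 2)) (Ioo 0 (π / 2)) := by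
  rw [← tan_sq_image_Ioo_zero_pi_div_two, integrableOn_image_iff_integrableOn_abs_deriv_smul
    measurableSet_Ioo (fun φ hφ => hasDerivWithinAt_tan_sq hφ _)
    injOn_tan_sq_Ioo_zero_pi_div_two]
  refine integrableOn_congr_fun (fun φ hφ => ?_) measurableSet_Ioo
  rw [smul_eq_mul, abs_two_mul_tan_div_cos_sq hφ]

theorem integral_Ioi_zero_eq_tan_sq (g : ℝ → ℝ) :
    ∫ x in Ioi 0, g x = ∫ φ in Ioo 0 (π / 2), 2 * tan φ / cos φ ^ 2 * g (tan φ ^ 2) := by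
  rw [← tan_sq_image_Ioo_zero_pi_div_two, integral_image_eq_integral_abs_deriv_smul
    measurableSet_Ioo (fun φ hφ => hasDerivWithinAt_tan_sq hφ _)
    injOn_tan_sq_Ioo_zero_pi_div_two]
  refine setIntegral_congr_fun measurableSet_Ioo (fun φ hφ => ?_)
  rw [smul_eq_mul, abs_two_mul_tan_div_cos_sq hφ]

noncomputable def fisherMomentIntegrand (k : ℕ) (t x : ℝ) : ℝ :=
  (x / (x + 1 / t)) ^ k * (√(4 - (1 - t) ^ 2 * x) / (2 * π * √x * (1 + t * x)))

theorem fisherMomentIntegrand_one_tan_sq (k : ℕ) {φ : ℝ} (hφ : φ ∈ Ioo 0 (π / 2)) :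
    2 * tan φ / cos φ ^ 2 * fisherMomentIntegrand k 1 (tan φ ^ 2) = 2 / π * sin φ ^ (2 * k) := by
  have hcos : 0 < cos φ := cos_pos_of_mem_Ioo ⟨by linarith [hφ.1, pi_pos], hφ.2⟩
  have hsin : 0 < sin φ := sin_pos_of_pos_of_lt_pi hφ.1 (by linarith [hφ.2, pi_pos])
  have htan : tan φ = sin φ / cos φ := tan_eq_sin_div_cos φ
  have hsin_sq : tan φ ^ 2 / (tan φ ^ 2 + 1 / 1) = sin φ ^ 2 := by
    rw [htan]
    field_simp
    simp [sin_sq_add_cos_sq]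
  rw [fisherMomentIntegrand, hsin_sq, sqrt_sq (htan ▸ by positivity), pow_mul]
  norm_num
  rw [htan]
  field_simp
  rw [cos_sq_add_sin_sq]

theorem integrableOn_fisherMomentIntegrand_one (k : ℕ) :
    IntegrableOn (fisherMomentIntegrand k 1) (Ioi 0) := by
  rw [integrableOn_Ioi_zero_iff_tan_sq,
    integrableOn_congr_fun (fun φ => fisherMomentIntegrand_one_tan_sq k) measurableSet_Ioo]
  exact (Continuous.integrableOn_Icc (by fun_prop)).mono_set Ioo_subset_Icc_self

theorem integral_fisherMomentIntegrand_one (k : ℕ) :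
    ∫ x in Ioi 0, fisherMomentIntegrand k 1 x = k.centralBinom / 4 ^ k := by
  rw [integral_Ioi_zero_eq_tan_sq,
    setIntegral_congr_fun measurableSet_Ioo (fun φ => fisherMomentIntegrand_one_tan_sq k),
    integral_Ioc_eq_integral_Ioo.symm, ← intervalIntegral.integral_of_le (by positivity),
    intervalIntegral.integral_const_mul, integral_sin_pow_two_mul_zero_pi_div_two]
  field_simp

theorem norm_fisherMomentIntegrand_le (k : ℕ) {t x : ℝ} (ht : 1 / 2 ≤ t) (hx : 0 < x) :
    ‖fisherMomentIntegrand k t x‖ ≤ 2 * fisherMomentIntegrand 0 1 x := by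
  have ht₀ : 0 < t := by linarith
  have hratio : ‖x / (x + 1 / t)‖ ≤ 1 := by
    rw [Real.norm_of_nonneg (by positivity), div_le_one (by positivity)]
    linarith [one_div_pos.2 ht₀]
  have hsqrt : √(4 - (1 - t) ^ 2 * x) ≤ 2 := by
    rw [show (2 : ℝ) = √(2 ^ 2) from (sqrt_sq zero_le_two).symm]
    exact sqrt_le_sqrt (by nlinarith [sq_nonneg (1 - t)])
  have hden : π * √x * (1 + x) ≤ 2 * π * √x * (1 + t * x) := by
    have := mul_le_mul_of_nonneg_left (show 1 + x ≤ 2 * (1 + t * x) by nlinarith)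
      (mul_pos pi_pos (sqrt_pos.2 hx)).le
    linarith
  have hpos : 0 < π * √x * (1 + x) := by have := sqrt_pos.2 hx; positivity
  rw [fisherMomentIntegrand, norm_mul, norm_pow,
    Real.norm_of_nonneg (div_nonneg (sqrt_nonneg _) (by positivity))]
  calc ‖x / (x + 1 / t)‖ ^ k * (√(4 - (1 - t) ^ 2 * x) / (2 * π * √x * (1 + t * x)))
      ≤ 1 * (2 / (π * √x * (1 + x))) :=
        mul_le_mul (pow_le_one₀ (norm_nonneg _) hratio) (div_le_div₀ zero_le_two hsqrt hpos hden)
          (by positivity) zero_le_one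
    _ = 2 * fisherMomentIntegrand 0 1 x := by
        norm_num [fisherMomentIntegrand]
        field_simp

theorem continuousAt_fisherMomentIntegrand_one (k : ℕ) {x : ℝ} (hx : 0 < x) :
    ContinuousAt (fun t => fisherMomentIntegrand k t x) 1 := by
  unfold fisherMomentIntegrand
  have := sqrt_pos.2 hx
  fun_prop (disch := positivity)

theorem tendsto_integral_fisherMomentIntegrand (k : ℕ) :
    Tendsto (fun t => ∫ x in Ioi 0, fisherMomentIntegrand k t x) (𝓝 1)
      (𝓝 (k.centralBinom / 4 ^ k)) := by
  rw [← integral_fisherMomentIntegrand_one]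
  refine tendsto_integral_filter_of_dominated_convergence (fun x => 2 * fisherMomentIntegrand 0 1 x)
    (Eventually.of_forall fun t => ?_) ?_ ((integrableOn_fisherMomentIntegrand_one 0).const_mul 2)
    ?_
  · exact (Measurable.aestronglyMeasurable (by unfold fisherMomentIntegrand; fun_prop))
  · filter_upwards [Ici_mem_nhds (show (1 / 2 : ℝ) < 1 by norm_num)] with t ht
    exact (ae_restrict_iff' measurableSet_Ioi).2 <| ae_of_all _ fun x hx =>
      norm_fisherMomentIntegrand_le k ht hx
  · exact (ae_restrict_iff' measurableSet_Ioi).2 <| ae_of_all _ fun x hx =>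
      (continuousAt_fisherMomentIntegrand_one k hx).tendsto

theorem fisherMomentIntegrand_eq {k : ℕ} {t x : ℝ} (ht : t < 1) (hx : 0 < x) :
    fisherMomentIntegrand k t x = (x / (x + 1 / t)) ^ k *
      ((1 - t) * √((4 / (1 - t) ^ 2 - x) * x) / (2 * π * x * (1 + t * x))) := by
  have h1t : 0 < 1 - t := by linarith
  have hsqrt : (1 - t) * √((4 / (1 - t) ^ 2 - x) * x) = √(4 - (1 - t) ^ 2 * x) * √x := by
    rw [← sqrt_mul' _ hx.le, ← sqrt_sq h1t.le, ← sqrt_mul (sq_nonneg _), sqrt_sq h1t.le]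
    congr 1
    field_simp
  have := sqrt_pos.2 hx
  rw [fisherMomentIntegrand, hsqrt]
  field_simp
  rw [sq_sqrt hx.le]
  ring

theorem intervalIntegral_eq_integral_fisherMomentIntegrand (k : ℕ) {t : ℝ} (ht : t < 1) :
    ∫ x in (0 : ℝ)..4 / (1 - t) ^ 2,
        (x / (x + 1 / t)) ^ k *
          ((1 - t) * √((4 / (1 - t) ^ 2 - x) * x) / (2 * π * x * (1 + t * x))) =
      ∫ x in Ioi 0, fisherMomentIntegrand k t x := by
  have h1t : 0 < 1 - t := by linarith
  rw [intervalIntegral.integral_of_le (by positivity),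
    setIntegral_congr_fun measurableSet_Ioc fun x hx => (fisherMomentIntegrand_eq ht hx.1).symm]
  refine (setIntegral_eq_of_subset_of_forall_sdiff_eq_zero measurableSet_Ioi Ioc_subset_Ioi_self
    fun x ⟨(hx₀ : 0 < x), hxb⟩ => ?_).symm
  have hxb : 4 < (1 - t) ^ 2 * x := by
    rw [← div_lt_iff₀' (by positivity)]
    exact lt_of_not_ge fun h => hxb ⟨hx₀, h⟩
  rw [fisherMomentIntegrand, sqrt_eq_zero_of_nonpos (by linarith)]
  simp

theorem fisher_I_k_tendsto_centralBinom_general (k : ℕ) :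
    Tendsto
      (fun t : ℝ =>
        ∫ x in (0:ℝ)..(4 / (1 - t) ^ 2),
          (x / (x + 1 / t)) ^ k *
            ((1 - t) * Real.sqrt ((4 / (1 - t) ^ 2 - x) * x) /
              (2 * Real.pi * x * (1 + t * x))))
      (nhdsWithin 1 (Set.Ioo (0:ℝ) 1))
      (nhds ((Nat.choose (2 * k) k : ℝ) / 4 ^ k)) := by
  rw [← Nat.centralBinom_eq_two_mul_choose]
  refine ((tendsto_integral_fisherMomentIntegrand k).mono_left nhdsWithin_le_nhds).congr' ?_
  filter_upwards [self_mem_nhdsWithin] with t ht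
  exact (intervalIntegral_eq_integral_fisherMomentIntegrand k ht.2).symm

/-- As `t → 1⁻` (with `0 < t < 1`), the Fisher moment functional
`I_k(t) = ∫₀ᵇ (x/(x+1/t))ᵏ p_{1,t}(x) dx` with `b = 4/(1−t)²` converges to
`C(2k,k)/4ᵏ`, the `k`-th moment of the arcsine law on `[0,2]` divided suitably. -/
theorem fisher_I_k_tendsto_centralBinom (k : ℕ) (hk : 1 ≤ k) :
    Tendsto
      (fun t : ℝ =>
        ∫ x in (0:ℝ)..(4 / (1 - t) ^ 2),
          (x / (x + 1 / t)) ^ k *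
            ((1 - t) * Real.sqrt ((4 / (1 - t) ^ 2 - x) * x) /
              (2 * Real.pi * x * (1 + t * x))))
      (nhdsWithin 1 (Set.Ioo (0:ℝ) 1))
      (nhds ((Nat.choose (2 * k) k : ℝ) / 4 ^ k)) :=
  fisher_I_k_tendsto_centralBinom_general k
end
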